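/- With the same setup (X = ZΣ^{1/2}, (1/κ)I ⪯ Σ ⪯ I, ZZ^T invertible, ρ‖Z‖_op²/d < 1), the training-error increment satisfies (dσ⁴/n)·Tr(((I − (ρ/d)ZZ^T)^{-2} − I)(ZΣZ^T + dσ² I)^{-1}) ≤ (κσ⁴/n)·Tr(((I − (ρ/d)ZZ^T)^{-2} − I)((1/d)ZZ^T + κσ² I)^{-1}). -/

import Mathlib

set_option maxHeartbeats 1000000

open Matrix
open scoped Matrix.Norms.L2Operator

section Aux

variable {m : Type*} [Fintype m] [DecidableEq m]

section PsdSqrt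

open scoped MatrixOrder

noncomputable def Matrix.PosSemidef.sqrt {A : Matrix m m ℝ} (_hA : A.PosSemidef) :
    Matrix m m ℝ := CFC.sqrt A

lemma Matrix.PosSemidef.sqrt_mul_self {A : Matrix m m ℝ} (hA : A.PosSemidef) :
    hA.sqrt * hA.sqrt = A := CFC.sqrt_mul_sqrt_self A hA.nonneg

lemma Matrix.PosSemidef.posSemidef_sqrt {A : Matrix m m ℝ} (hA : A.PosSemidef) :
    hA.sqrt.PosSemidef := (CFC.sqrt_nonneg A).posSemidef

end PsdSqrt

lemma aux_psd_smul {A : Matrix m m ℝ} (hA : A.PosSemidef) {c : ℝ} (hc : 0 ≤ c) :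
    (c • A).PosSemidef := by
  refine Matrix.PosSemidef.of_dotProduct_mulVec_nonneg ?_ fun x => ?_
  · unfold Matrix.IsHermitian
    rw [conjTranspose_smul, hA.1.eq]
    simp
  · rw [smul_mulVec, dotProduct_smul, smul_eq_mul]
    exact mul_nonneg hc (hA.dotProduct_mulVec_nonneg x)

lemma aux_trace_nonneg {A : Matrix m m ℝ} (hA : A.PosSemidef) : 0 ≤ A.trace := by
  rw [Matrix.trace]
  refine Finset.sum_nonneg fun i _ => ?_
  simpa using hA.dotProduct_mulVec_nonneg (Pi.single i 1)

lemma aux_trace_mul_nonneg {A B : Matrix m m ℝ} (hA : A.PosSemidef) (hB : B.PosSemidef) :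
    0 ≤ (A * B).trace := by
  have h1 : A * B = hA.sqrt * (hA.sqrt * B) := by
    rw [← Matrix.mul_assoc, hA.sqrt_mul_self]
  rw [h1, trace_mul_comm, Matrix.mul_assoc, ← Matrix.mul_assoc]
  have h2 : Matrix.PosSemidef (hA.sqrt * B * hA.sqrt) := by
    have := hB.conjTranspose_mul_mul_same hA.sqrt
    rwa [hA.posSemidef_sqrt.isHermitian.eq] at this
  exact aux_trace_nonneg h2

lemma aux_sqrt_det_isUnit {Q : Matrix m m ℝ} (hQ : Q.PosDef) :
    IsUnit (hQ.posSemidef.sqrt).det := by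
  have h : (hQ.posSemidef.sqrt).det * (hQ.posSemidef.sqrt).det = Q.det := by
    rw [← Matrix.det_mul, hQ.posSemidef.sqrt_mul_self]
  have hd := hQ.det_pos
  refine isUnit_iff_ne_zero.mpr fun h0 => ?_
  rw [h0, mul_zero] at h
  linarith [h ▸ hd]

lemma aux_sqrt_conj_inv {Q T : Matrix m m ℝ} (hTu : IsUnit T.det) (h : T * T = Q) :
    T * Q⁻¹ * T = 1 := by
  rw [← h, Matrix.mul_inv_rev, ← Matrix.mul_assoc, Matrix.mul_nonsing_inv _ hTu, Matrix.one_mul,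
    Matrix.nonsing_inv_mul _ hTu]

lemma aux_inv_sub_inv {A B : Matrix m m ℝ} (hA : A.PosDef)
    (hBA : (B - A).PosSemidef) : (A⁻¹ - B⁻¹).PosSemidef := by
  have hB : B.PosDef := by
    have h : B = A + (B - A) := by abel
    rw [h]; exact hA.add_posSemidef hBA
  have hAinv : (A⁻¹).PosDef := hA.inv
  set T := hAinv.posSemidef.sqrt with hTdef
  have hTherm : Tᴴ = T := hAinv.posSemidef.posSemidef_sqrt.isHermitian.eq
  have hTu : IsUnit T.det := aux_sqrt_det_isUnit hAinv
  have hTT : T * T = A⁻¹ := hAinv.posSemidef.sqrt_mul_self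
  have hTAT : T * A * T = 1 := by
    have h := aux_sqrt_conj_inv hTu hTT
    rwa [Matrix.nonsing_inv_nonsing_inv _ hA.det_pos.ne'.isUnit] at h
  have hM1 : (T * B * T - 1).PosSemidef := by
    have h := hBA.conjTranspose_mul_mul_same T
    rw [hTherm] at h
    have he : T * (B - A) * T = T * B * T - 1 := by
      rw [Matrix.mul_sub, Matrix.sub_mul, hTAT]
    rwa [he] at h
  have hMpd : (T * B * T).PosDef := by
    have h : T * B * T = 1 + (T * B * T - 1) := by abel
    rw [h]; exact Matrix.PosDef.one.add_posSemidef hM1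
  have hMinv : ((T * B * T)⁻¹).PosDef := hMpd.inv
  set U := hMinv.posSemidef.sqrt with hUdef
  have hUherm : Uᴴ = U := hMinv.posSemidef.posSemidef_sqrt.isHermitian.eq
  have hUu : IsUnit U.det := aux_sqrt_det_isUnit hMinv
  have hUU : U * U = (T * B * T)⁻¹ := hMinv.posSemidef.sqrt_mul_self
  have hUMU : U * (T * B * T) * U = 1 := by
    have h := aux_sqrt_conj_inv hUu hUU
    rwa [Matrix.nonsing_inv_nonsing_inv _ hMpd.det_pos.ne'.isUnit] at h
  have h1Minv : ((1 : Matrix m m ℝ) - (T * B * T)⁻¹).PosSemidef := by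
    have h := hM1.conjTranspose_mul_mul_same U
    rw [hUherm] at h
    have he : U * (T * B * T - 1) * U = 1 - (T * B * T)⁻¹ := by
      rw [Matrix.mul_sub, Matrix.sub_mul, hUMU, Matrix.mul_one, hUU]
    rwa [he] at h
  have h := h1Minv.conjTranspose_mul_mul_same T
  rw [hTherm] at h
  have hfinal : T * ((1 : Matrix m m ℝ) - (T * B * T)⁻¹) * T = A⁻¹ - B⁻¹ := by
    rw [Matrix.mul_sub, Matrix.sub_mul, Matrix.mul_one, hTT]
    congr 1
    rw [Matrix.mul_inv_rev, Matrix.mul_inv_rev, ← Matrix.mul_assoc, ← Matrix.mul_assoc,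
      Matrix.mul_nonsing_inv _ hTu, Matrix.one_mul, Matrix.mul_assoc,
      Matrix.nonsing_inv_mul _ hTu, Matrix.mul_one]
  rwa [hfinal] at h

lemma aux_sq_sub_one_psd {S : Matrix m m ℝ} (h1 : (S - 1).PosSemidef) :
    (S * S - 1).PosSemidef := by
  have hid : S * S - 1 = (S - 1)ᴴ * (S - 1) + ((S - 1) + (S - 1)) := by
    rw [h1.isHermitian.eq]
    noncomm_ring
  rw [hid]
  exact (Matrix.posSemidef_conjTranspose_mul_self _).add (h1.add h1)

lemma aux_smul_one_posDef {c : ℝ} (hc : 0 < c) : (c • (1 : Matrix m m ℝ)).PosDef := by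
  have h : c • (1 : Matrix m m ℝ) = Matrix.diagonal (fun _ => c) := by
    rw [smul_one_eq_diagonal]
  rw [h]
  exact .diagonal fun _ => hc

lemma aux_dot_sq (k : ℕ) (x : Fin k → ℝ) :
    x ⬝ᵥ x = ‖(WithLp.equiv 2 (Fin k → ℝ)).symm x‖ ^ 2 := by
  rw [EuclideanSpace.norm_eq, Real.sq_sqrt (by positivity)]
  simp [dotProduct, sq, Real.norm_eq_abs, abs_mul_abs_self]

lemma aux_one_sub_smul_posDef {n d : ℕ} (Z : Matrix (Fin n) (Fin d) ℝ) {c : ℝ} (hc : 0 ≤ c)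
    (h : c * ‖Z‖ ^ 2 < 1) : ((1 : Matrix (Fin n) (Fin n) ℝ) - c • (Z * Zᵀ)).PosDef := by
  have hK : (Z * Zᵀ).PosSemidef := by
    have := Matrix.posSemidef_self_mul_conjTranspose Z
    rwa [Z.conjTranspose_eq_transpose_of_trivial] at this
  refine Matrix.PosDef.of_dotProduct_mulVec_pos (Matrix.isHermitian_one.sub (aux_psd_smul hK hc).1) fun x hx => ?_
  have hsx : star x = x := by simp
  rw [hsx, Matrix.sub_mulVec, dotProduct_sub, Matrix.one_mulVec, smul_mulVec,
    dotProduct_smul, smul_eq_mul]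
  set w : Fin d → ℝ := Zᵀ *ᵥ x with hw
  have hq : x ⬝ᵥ (Z * Zᵀ) *ᵥ x = w ⬝ᵥ w := by
    rw [← Matrix.mulVec_mulVec, Matrix.dotProduct_mulVec, hw, ← Matrix.mulVec_transpose]
  rw [hq]
  set xE : EuclideanSpace ℝ (Fin n) := (WithLp.equiv 2 (Fin n → ℝ)).symm x with hxE
  set wE : EuclideanSpace ℝ (Fin d) := (WithLp.equiv 2 (Fin d → ℝ)).symm w with hwE
  have hxx : x ⬝ᵥ x = ‖xE‖ ^ 2 := aux_dot_sq n x
  have hww : w ⬝ᵥ w = ‖wE‖ ^ 2 := aux_dot_sq d w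
  have hbound : ‖wE‖ ≤ ‖Z‖ * ‖xE‖ := by
    have h1 : ‖wE‖ ≤ ‖Zᵀ‖ * ‖xE‖ := Matrix.l2_opNorm_mulVec Zᵀ xE
    have h3 : ‖Zᵀ‖ = ‖Z‖ := by
      rw [← Z.conjTranspose_eq_transpose_of_trivial, Matrix.l2_opNorm_conjTranspose]
    rwa [h3] at h1
  have hxpos : 0 < ‖xE‖ := by
    rw [norm_pos_iff]
    simpa [hxE] using hx
  rw [hxx, hww]
  have hw2 : ‖wE‖ ^ 2 ≤ ‖Z‖ ^ 2 * ‖xE‖ ^ 2 := by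
    nlinarith [norm_nonneg wE, norm_nonneg (Z : Matrix (Fin n) (Fin d) ℝ), norm_nonneg xE]
  nlinarith [mul_le_mul_of_nonneg_left hw2 hc, mul_pos (sub_pos.mpr h) (pow_pos hxpos 2)]

end Aux

/-- Upper bound on the training-error increment: with `X = ZΣ^{1/2}`,
`(1/κ)I ⪯ Σ ⪯ I` and `ZZᵀ` invertible,
`(dσ⁴/n)·Tr(((I − (ρ/d)ZZᵀ)⁻² − I)(ZΣZᵀ + dσ²I)⁻¹)
  ≤ (κσ⁴/n)·Tr(((I − (ρ/d)ZZᵀ)⁻² − I)((1/d)ZZᵀ + κσ²I)⁻¹)`. -/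
theorem stmt18 (n d : ℕ) (hn : 0 < n) (hnd : n ≤ d) (hd : 0 < d)
    (Z : Matrix (Fin n) (Fin d) ℝ) (hZ : IsUnit (Z * Zᵀ).det)
    (Sigma R : Matrix (Fin d) (Fin d) ℝ) (κ : ℝ) (hκ : 1 ≤ κ)
    (hSigSym : Sigma.IsSymm)
    (hlow : (Sigma - (1 / κ) • (1 : Matrix (Fin d) (Fin d) ℝ)).PosSemidef)
    (hup : ((1 : Matrix (Fin d) (Fin d) ℝ) - Sigma).PosSemidef)
    (hR : R.PosSemidef) (hRsq : R * R = Sigma)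
    (X : Matrix (Fin n) (Fin d) ℝ) (hX : X = Z * R)
    (σ ρ : ℝ) (hσ : 0 < σ) (hρ : 0 ≤ ρ)
    (hop : ρ * ‖Z‖ ^ 2 / (d : ℝ) < 1) :
    ((d : ℝ) * σ ^ 4 / (n : ℝ)) *
        Matrix.trace ((((1 : Matrix (Fin n) (Fin n) ℝ) - (ρ / (d : ℝ)) • (Z * Zᵀ))⁻¹
            * ((1 : Matrix (Fin n) (Fin n) ℝ) - (ρ / (d : ℝ)) • (Z * Zᵀ))⁻¹ - 1)
          * (Z * Sigma * Zᵀ + ((d : ℝ) * σ ^ 2) • 1)⁻¹)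
      ≤ (κ * σ ^ 4 / (n : ℝ)) *
          Matrix.trace ((((1 : Matrix (Fin n) (Fin n) ℝ) - (ρ / (d : ℝ)) • (Z * Zᵀ))⁻¹
              * ((1 : Matrix (Fin n) (Fin n) ℝ) - (ρ / (d : ℝ)) • (Z * Zᵀ))⁻¹ - 1)
            * ((1 / (d : ℝ)) • (Z * Zᵀ) + (κ * σ ^ 2) • 1)⁻¹) := by
  have hd0 : (0 : ℝ) < (d : ℝ) := by exact_mod_cast hd
  have hn0 : (0 : ℝ) < (n : ℝ) := by exact_mod_cast hn
  have hκ0 : (0 : ℝ) < κ := lt_of_lt_of_le one_pos hκ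
  have hK : (Z * Zᵀ).PosSemidef := by
    have := Matrix.posSemidef_self_mul_conjTranspose Z
    rwa [Z.conjTranspose_eq_transpose_of_trivial] at this
  set B : Matrix (Fin n) (Fin n) ℝ := 1 - (ρ / (d : ℝ)) • (Z * Zᵀ) with hBdef
  set A₁ : Matrix (Fin n) (Fin n) ℝ := Z * Sigma * Zᵀ + ((d : ℝ) * σ ^ 2) • 1 with hA₁def
  set C : Matrix (Fin n) (Fin n) ℝ := (1 / (d : ℝ)) • (Z * Zᵀ) + (κ * σ ^ 2) • 1 with hCdef
  set A₂ : Matrix (Fin n) (Fin n) ℝ := (1 / κ) • (Z * Zᵀ) + ((d : ℝ) * σ ^ 2) • 1 with hA₂def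
  have hcnn : 0 ≤ ρ / (d : ℝ) := div_nonneg hρ hd0.le
  have hBpd : B.PosDef := by
    refine aux_one_sub_smul_posDef Z hcnn ?_
    calc ρ / (d : ℝ) * ‖Z‖ ^ 2 = ρ * ‖Z‖ ^ 2 / (d : ℝ) := by ring
    _ < 1 := hop
  have hB1 : (B⁻¹ - 1).PosSemidef := by
    have h1B : ((1 : Matrix (Fin n) (Fin n) ℝ) - B).PosSemidef := by
      rw [hBdef, sub_sub_cancel]
      exact aux_psd_smul hK hcnn
    have h := aux_inv_sub_inv hBpd h1B
    rwa [inv_one] at h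
  have hM : (B⁻¹ * B⁻¹ - 1).PosSemidef := aux_sq_sub_one_psd hB1
  have hA2pd : A₂.PosDef :=
    Matrix.PosDef.posSemidef_add (aux_psd_smul hK (by positivity))
      (aux_smul_one_posDef (by positivity))
  have hCpd : C.PosDef :=
    Matrix.PosDef.posSemidef_add (aux_psd_smul hK (by positivity))
      (aux_smul_one_posDef (by positivity))
  have hdiff : (A₁ - A₂).PosSemidef := by
    have h := hlow.mul_mul_conjTranspose_same Z
    rw [Z.conjTranspose_eq_transpose_of_trivial] at h
    have hsm : Z * ((1 / κ) • (1 : Matrix (Fin d) (Fin d) ℝ)) * Zᵀ = (1 / κ) • (Z * Zᵀ) := by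
      rw [Matrix.mul_smul, Matrix.mul_one, Matrix.smul_mul]
    have he : Z * (Sigma - (1 / κ) • 1) * Zᵀ = A₁ - A₂ := by
      rw [Matrix.mul_sub, Matrix.sub_mul, hsm, hA₁def, hA₂def]
      abel
    rwa [he] at h
  have hA1pd : A₁.PosDef := by
    have h : A₁ = A₂ + (A₁ - A₂) := by abel
    rw [h]; exact hA2pd.add_posSemidef hdiff
  have hinv : (A₂⁻¹ - A₁⁻¹).PosSemidef := aux_inv_sub_inv hA2pd hdiff
  have htr : 0 ≤ ((B⁻¹ * B⁻¹ - 1) * (A₂⁻¹ - A₁⁻¹)).trace := aux_trace_mul_nonneg hM hinv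
  rw [Matrix.mul_sub, Matrix.trace_sub] at htr
  have hA2C : A₂ = ((d : ℝ) / κ) • C := by
    rw [hCdef, smul_add, smul_smul, smul_smul, hA₂def]
    congr 1
    · congr 1
      field_simp
    · congr 1
      field_simp
  have hA2inv : A₂⁻¹ = (κ / (d : ℝ)) • C⁻¹ := by
    have hcd : ((d : ℝ) / κ) ≠ 0 := by positivity
    haveI := invertibleOfNonzero hcd
    rw [hA2C, Matrix.inv_smul C ((d : ℝ) / κ) hCpd.det_pos.ne'.isUnit, invOf_eq_inv, inv_div]
  have hkey : ((B⁻¹ * B⁻¹ - 1) * A₁⁻¹).trace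
      ≤ (κ / (d : ℝ)) * ((B⁻¹ * B⁻¹ - 1) * C⁻¹).trace := by
    have h2 : ((B⁻¹ * B⁻¹ - 1) * A₂⁻¹).trace
        = (κ / (d : ℝ)) * ((B⁻¹ * B⁻¹ - 1) * C⁻¹).trace := by
      rw [hA2inv, mul_smul_comm, Matrix.trace_smul, smul_eq_mul]
    linarith
  have hcoef : 0 ≤ (d : ℝ) * σ ^ 4 / (n : ℝ) := by positivity
  calc ((d : ℝ) * σ ^ 4 / (n : ℝ)) * ((B⁻¹ * B⁻¹ - 1) * A₁⁻¹).trace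
      ≤ ((d : ℝ) * σ ^ 4 / (n : ℝ)) * ((κ / (d : ℝ)) * ((B⁻¹ * B⁻¹ - 1) * C⁻¹).trace) :=
        mul_le_mul_of_nonneg_left hkey hcoef
    _ = (κ * σ ^ 4 / (n : ℝ)) * ((B⁻¹ * B⁻¹ - 1) * C⁻¹).trace := by
        field_simp
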